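/- arXiv:0707.2125 — 2 statements merged into one kernel-verified Lean document; each statement's English description precedes it below -/
import Mathlib

section
/- Let r ≥ 1 and let f be a smooth diffeomorphism of Δʳ onto itself with f*ω₀ = ω₀ and f*ω₋ = ω₋. Then there exist a permutation σ of {1, …, r} and complex numbers c_1, …, c_r with |c_j| = 1 such that the Fréchet derivative of f at 0 is the ℂ-linear map (Df(0)v)_j = c_j·v_{σ(j)}; in particular Df(0) is a linear automorphism of the polydisc Δʳ. -/
open Complex Set

noncomputable section

/-- The open unit polydisc in `ℂʳ`. -/
def polydisc (r : ℕ) : Set (Fin r → ℂ) := {z | ∀ j, ‖z j‖ < 1}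

/-- The flat symplectic form `ω₀(u,v) = Σⱼ Im (conj uⱼ * vⱼ)` on `ℂʳ`. -/
def omega0 {r : ℕ} (u v : Fin r → ℂ) : ℝ := ∑ j, ((starRingEnd ℂ) (u j) * v j).im

/-- The hyperbolic symplectic form
`ω₋(z)(u,v) = Σⱼ Im (conj uⱼ * vⱼ) / (1 - |zⱼ|²)²` on the polydisc. -/
def omegaMinus {r : ℕ} (z u v : Fin r → ℂ) : ℝ :=
  ∑ j, ((starRingEnd ℂ) (u j) * v j).im / (1 - ‖z j‖ ^ 2) ^ 2

/-- `f` is a smooth diffeomorphism of `s` onto `t`: it is `C^∞` on `s`, maps `s` to `t`,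
and has a `C^∞` inverse mapping `t` to `s`. -/
def IsSmoothDiffeoOn {E F : Type*} [NormedAddCommGroup E] [NormedSpace ℝ E]
    [NormedAddCommGroup F] [NormedSpace ℝ F] (f : E → F) (s : Set E) (t : Set F) : Prop :=
  ContDiffOn ℝ (⊤ : ℕ∞) f s ∧ Set.MapsTo f s t ∧
    ∃ g : F → E, ContDiffOn ℝ (⊤ : ℕ∞) g t ∧ Set.MapsTo g t s ∧ Set.InvOn g f s t

/-! Writing `ω₋(z)(u, v) = ω₀(u, D(z) v)`, where `D(z)` multiplies the `j`-th coordinate by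
`(1 - |zⱼ|²)⁻²`, nondegeneracy of `ω₀` turns the two pullback identities into
`Df(z) ∘ D(z) = D(f z) ∘ Df(z)`. So `D(z)` and `D(f z)` have the same eigenvalue
multiplicities, i.e. `f` preserves the multiset of moduli `|zⱼ|`. Hence `f(0) = 0` and `f` maps
each disc `Δ ∩ ℂ eₖ` into the union of the coordinate axes without changing the modulus;
differentiating along `t ↦ f(t ζ eₖ)` at `0`, `Df(0)` sends unit axis vectors to unit axis
vectors. Finally `ω₀(eₖ, i eₖ) = 1` forces `Df(0)` to send `eₖ` and `i eₖ` to the same axis with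
phases differing by `i`, so `Df(0)` is complex linear and monomial, and injectivity makes the
axis map a permutation. -/

open Finset Filter Topology Module

section DiagScale

variable {ι : Type*}

def diagScale (a : ι → ℝ) : (ι → ℂ) →ₗ[ℝ] (ι → ℂ) where
  toFun v l := (a l : ℂ) * v l
  map_add' u v := by ext l; simp [mul_add]
  map_smul' c v := by ext l; simp [Complex.real_smul]; ring

@[simp]
lemma diagScale_apply (a : ι → ℝ) (v : ι → ℂ) (l : ι) : diagScale a v l = a l * v l := rfl

lemma eigenspace_diagScale (a : ι → ℝ) (μ : ℝ) :
    End.eigenspace (diagScale a) μ =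
      ⨅ l ∈ {l | a l ≠ μ}, LinearMap.ker (LinearMap.proj l : (ι → ℂ) →ₗ[ℝ] ℂ) := by
  ext v
  simp only [End.mem_eigenspace_iff, funext_iff, diagScale_apply, Pi.smul_apply,
    Complex.real_smul, Submodule.mem_iInf, LinearMap.mem_ker, LinearMap.proj_apply]
  refine forall_congr' fun l => ?_
  rw [← sub_eq_zero, ← sub_mul, mul_eq_zero, sub_eq_zero, Complex.ofReal_inj]
  tauto

lemma finrank_eigenspace_diagScale [Fintype ι] (a : ι → ℝ) (μ : ℝ) :
    finrank ℝ (End.eigenspace (diagScale a) μ) = 2 * #{l | a l = μ} := by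
  classical
  rw [eigenspace_diagScale, (LinearMap.iInfKerProjEquiv ℝ (fun _ : ι => ℂ)
    (I := {l | a l = μ}) (J := {l | a l ≠ μ}) ?_ ?_).finrank_eq, finrank_pi_fintype]
  · simp [Complex.finrank_real_complex, mul_comm]
  · exact Set.disjoint_left.mpr fun l h h' => h' h
  · intro l _; by_cases h : a l = μ <;> simp [h]

lemma card_eq_of_diagScale_conj [Fintype ι] {a b : ι → ℝ} (A : (ι → ℂ) ≃ₗ[ℝ] (ι → ℂ))
    (h : ∀ v, A (diagScale a v) = diagScale b (A v)) (μ : ℝ) :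
    #{l | a l = μ} = #{l | b l = μ} := by
  have hmap : (End.eigenspace (diagScale a) μ).map (A : (ι → ℂ) →ₗ[ℝ] (ι → ℂ)) =
      End.eigenspace (diagScale b) μ := by
    ext v
    rw [Submodule.map_equiv_eq_comap_symm, Submodule.mem_comap, End.mem_eigenspace_iff,
      End.mem_eigenspace_iff, ← A.injective.eq_iff, LinearEquiv.coe_coe, h, map_smul,
      A.apply_symm_apply]
  have := LinearEquiv.finrank_map_eq A (End.eigenspace (diagScale a) μ)
  rw [hmap, finrank_eigenspace_diagScale, finrank_eigenspace_diagScale] at this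
  omega

end DiagScale

section Omega

variable {r : ℕ}

lemma omega0_zero_right (u : Fin r → ℂ) : omega0 u 0 = 0 := by simp [omega0]

lemma omega0_sub_right (u v w : Fin r → ℂ) :
    omega0 u (v - w) = omega0 u v - omega0 u w := by
  simp [omega0, mul_sub, Finset.sum_sub_distrib]

lemma omega0_single_single (j k : Fin r) (a b : ℂ) :
    omega0 (Pi.single j a) (Pi.single k b) =
      if j = k then ((starRingEnd ℂ) a * b).im else 0 := by
  split_ifs with h
  · subst h
    rw [omega0, Finset.sum_eq_single j (fun l _ hl => by simp [hl]) (by simp)]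
    simp
  · exact Finset.sum_eq_zero fun l _ => by
      by_cases hl : l = j
      · subst hl; simp [h]
      · simp [hl]

lemma eq_zero_of_forall_omega0_eq_zero {w : Fin r → ℂ} (h : ∀ x, omega0 x w = 0) : w = 0 := by
  -- `ω₀(-i w, w) = Σₗ |wₗ|²`
  have hw := h (-I • w)
  simp only [omega0, Pi.smul_apply, smul_eq_mul, map_mul, map_neg, conj_I, neg_neg,
    mul_assoc, ← normSq_eq_conj_mul_self, I_mul_im, ofReal_re] at hw
  funext l
  exact normSq_eq_zero.mp
    ((Finset.sum_eq_zero_iff_of_nonneg fun l _ => normSq_nonneg (w l)).mp hw l (mem_univ l))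

lemma injective_of_omega0 {A : (Fin r → ℂ) →ₗ[ℝ] (Fin r → ℂ)}
    (hA : ∀ u v, omega0 (A u) (A v) = omega0 u v) : Function.Injective A := by
  refine (injective_iff_map_eq_zero A).mpr fun u hu =>
    eq_zero_of_forall_omega0_eq_zero fun x => ?_
  rw [← hA, hu, omega0_zero_right]

lemma map_diagScale_eq_of_omega0 {A : (Fin r → ℂ) →ₗ[ℝ] (Fin r → ℂ)} {a b : Fin r → ℝ}
    (hA : ∀ u v, omega0 (A u) (A v) = omega0 u v)
    (hab : ∀ u v, omega0 (A u) (diagScale b (A v)) = omega0 u (diagScale a v)) (v : Fin r → ℂ) :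
    A (diagScale a v) = diagScale b (A v) := by
  have hsurj : Function.Surjective A :=
    LinearMap.injective_iff_surjective.mp (injective_of_omega0 hA)
  refine (sub_eq_zero.mp (eq_zero_of_forall_omega0_eq_zero fun x => ?_)).symm
  obtain ⟨u, rfl⟩ := hsurj x
  rw [omega0_sub_right, hab, hA, sub_self]

end Omega

section Polydisc

variable {r : ℕ}

lemma isOpen_polydisc (r : ℕ) : IsOpen (polydisc r) := by
  have h : polydisc r = ⋂ j, (fun z : Fin r → ℂ => ‖z j‖) ⁻¹' Iio 1 := by
    ext z; simp [polydisc]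
  rw [h]
  exact isOpen_iInter_of_finite fun j => isOpen_Iio.preimage (by fun_prop)

lemma zero_mem_polydisc (r : ℕ) : (0 : Fin r → ℂ) ∈ polydisc r := fun j => by simp

lemma single_mem_polydisc (k : Fin r) {w : ℂ} (hw : ‖w‖ < 1) : Pi.single k w ∈ polydisc r := by
  intro l
  by_cases hl : l = k
  · subst hl; simpa using hw
  · simp [hl]

def hypWeight (t : ℝ) : ℝ := ((1 - t ^ 2) ^ 2)⁻¹

lemma hypWeight_injOn : InjOn hypWeight (Set.Ico 0 1) := by
  intro s ⟨hs0, hs1⟩ t ⟨ht0, ht1⟩ h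
  have hs : 0 < 1 - s ^ 2 := by nlinarith
  have ht : 0 < 1 - t ^ 2 := by nlinarith
  rw [hypWeight, hypWeight, inv_inj, pow_left_inj₀ hs.le ht.le two_ne_zero] at h
  exact (pow_left_inj₀ hs0 ht0 two_ne_zero).mp (by linarith)

lemma omegaMinus_eq_omega0_diagScale (z u v : Fin r → ℂ) :
    omegaMinus z u v = omega0 u (diagScale (fun l => hypWeight ‖z l‖) v) := by
  refine Finset.sum_congr rfl fun l _ => ?_
  rw [diagScale_apply, mul_left_comm, im_ofReal_mul, hypWeight, div_eq_inv_mul]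

lemma card_norm_apply_eq_of_bisymplectic {f : (Fin r → ℂ) → Fin r → ℂ}
    (hmaps : MapsTo f (polydisc r) (polydisc r))
    (h0 : ∀ z ∈ polydisc r, ∀ u v : Fin r → ℂ,
      omega0 (fderiv ℝ f z u) (fderiv ℝ f z v) = omega0 u v)
    (hm : ∀ z ∈ polydisc r, ∀ u v : Fin r → ℂ,
      omegaMinus (f z) (fderiv ℝ f z u) (fderiv ℝ f z v) = omegaMinus z u v)
    {z : Fin r → ℂ} (hz : z ∈ polydisc r) (t : ℝ) :
    #{l | ‖f z l‖ = t} = #{l | ‖z l‖ = t} := by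
  by_cases ht : t ∈ Set.Ico 0 1
  · have hcount : ∀ x ∈ polydisc r,
        #{l | ‖x l‖ = t} = #{l | hypWeight ‖x l‖ = hypWeight t} := fun x hx => by
      congr 1
      ext l
      simp [hypWeight_injOn.eq_iff ⟨norm_nonneg _, hx l⟩ ht]
    let A := LinearEquiv.ofInjectiveEndo (fderiv ℝ f z : (Fin r → ℂ) →ₗ[ℝ] Fin r → ℂ)
      (injective_of_omega0 (h0 z hz))
    have hconj : ∀ v, fderiv ℝ f z (diagScale (fun l => hypWeight ‖z l‖) v) =
        diagScale (fun l => hypWeight ‖f z l‖) (fderiv ℝ f z v) :=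
      map_diagScale_eq_of_omega0 (h0 z hz) fun u v => by
        simpa only [omegaMinus_eq_omega0_diagScale, ContinuousLinearMap.coe_coe] using hm z hz u v
    rw [hcount _ (hmaps hz), hcount z hz, card_eq_of_diagScale_conj A hconj]
  · have hempty : ∀ x ∈ polydisc r, #{l | ‖x l‖ = t} = 0 := fun x hx => by
      simp only [card_eq_zero, filter_eq_empty_iff]
      rintro l - rfl
      exact ht ⟨norm_nonneg _, hx l⟩
    rw [hempty _ (hmaps hz), hempty z hz]

end Polydisc

section Axes

variable {ι : Type*} [Fintype ι] [DecidableEq ι]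

lemma exists_eq_single_of_card_norm_eq {x : ι → ℂ} {k : ι} {w : ℂ}
    (h : ∀ t, #{l | ‖x l‖ = t} = #{l | ‖(Pi.single k w : ι → ℂ) l‖ = t}) :
    ∃ j c, ‖c‖ = ‖w‖ ∧ x = Pi.single j c := by
  have hnorm : ∀ l, x l = 0 ∨ ‖x l‖ = ‖w‖ := fun l => by
    obtain ⟨m, hm⟩ : (filter (fun m => ‖(Pi.single k w : ι → ℂ) m‖ = ‖x l‖) univ).Nonempty := by
      rw [← card_pos, ← h]
      exact card_pos.mpr ⟨l, by simp⟩
    have hm : ‖(Pi.single k w : ι → ℂ) m‖ = ‖x l‖ := by simpa using hm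
    by_cases hmk : m = k
    · exact Or.inr (by simpa [hmk] using hm.symm)
    · exact Or.inl (by simpa [hmk, eq_comm] using hm)
  by_cases hw : w = 0
  · exact ⟨k, 0, by simp [hw], funext fun l => by simpa [hw] using hnorm l⟩
  obtain ⟨j, hj⟩ : ∃ j, filter (fun l => ‖x l‖ = ‖w‖) univ = {j} := by
    rw [← card_eq_one, h]
    refine card_eq_one.mpr ⟨k, ?_⟩
    ext l
    by_cases hl : l = k <;> simp [hl, (norm_pos_iff.mpr hw).ne]
  have hxj : ‖x j‖ = ‖w‖ := by
    have : j ∈ filter (fun l => ‖x l‖ = ‖w‖) univ := by rw [hj]; exact mem_singleton_self j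
    simpa using this
  refine ⟨j, x j, hxj, funext fun l => ?_⟩
  by_cases hl : l = j
  · subst hl; simp
  · have : l ∉ filter (fun l => ‖x l‖ = ‖w‖) univ := by simp [hj, hl]
    simpa [hl] using (hnorm l).resolve_right (by simpa using this)

lemma isClosed_setOf_eq_single_norm_one :
    IsClosed {x : ι → ℂ | ∃ j c, ‖c‖ = 1 ∧ x = Pi.single j c} := by
  have h : {x : ι → ℂ | ∃ j c, ‖c‖ = 1 ∧ x = Pi.single j c} =
      ⋃ j, Pi.single j '' Metric.sphere (0 : ℂ) 1 := by
    ext x; simp [eq_comm]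
  rw [h]
  exact isClosed_iUnion_of_finite fun j =>
    ((isCompact_sphere 0 1).image (continuous_single (A := fun _ : ι => ℂ) j)).isClosed

end Axes

lemma exists_fderiv_single_eq_single_of_bisymplectic {r : ℕ} {f : (Fin r → ℂ) → Fin r → ℂ}
    (hf : DifferentiableAt ℝ f 0) (hmaps : MapsTo f (polydisc r) (polydisc r))
    (h0 : ∀ z ∈ polydisc r, ∀ u v : Fin r → ℂ,
      omega0 (fderiv ℝ f z u) (fderiv ℝ f z v) = omega0 u v)
    (hm : ∀ z ∈ polydisc r, ∀ u v : Fin r → ℂ,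
      omegaMinus (f z) (fderiv ℝ f z u) (fderiv ℝ f z v) = omegaMinus z u v)
    (k : Fin r) {ζ : ℂ} (hζ : ‖ζ‖ = 1) :
    ∃ j c, ‖c‖ = 1 ∧ fderiv ℝ f 0 (Pi.single k ζ) = Pi.single j c := by
  have haxis : ∀ w : ℂ, ‖w‖ < 1 → ∃ j c, ‖c‖ = ‖w‖ ∧ f (Pi.single k w) = Pi.single j c :=
    fun w hw => exists_eq_single_of_card_norm_eq
      (card_norm_apply_eq_of_bisymplectic hmaps h0 hm (single_mem_polydisc k hw))
  have hf0 : f 0 = 0 := by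
    obtain ⟨j, c, hc, hfc⟩ := haxis 0 (by simp)
    have hc0 : c = 0 := norm_eq_zero.mp (by simpa using hc)
    rw [Pi.single_zero] at hfc
    rw [hfc, hc0, Pi.single_zero]
  have hslope : Tendsto (fun t : ℝ => t⁻¹ • (f (t • Pi.single k ζ) - f 0)) (𝓝[>] 0)
      (𝓝 (fderiv ℝ f 0 (Pi.single k ζ))) := by
    have hline := ((hasDerivAt_id (0 : ℝ)).smul_const (Pi.single k ζ : Fin r → ℂ))
    have := (hf.hasFDerivAt.comp_hasDerivAt_of_eq (0 : ℝ) hline (by simp)).tendsto_slope_zero_right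
    simpa [Function.comp_def] using this
  refine isClosed_setOf_eq_single_norm_one.mem_of_tendsto hslope ?_
  filter_upwards [Ioo_mem_nhdsGT one_pos] with t ⟨ht0, ht1⟩
  have htζ : ‖t • ζ‖ = t := by simp [hζ, ht0.le]
  obtain ⟨j, c, hc, hfc⟩ := haxis (t • ζ) (htζ.symm ▸ ht1)
  refine ⟨j, t⁻¹ • c, by simp [hc, hζ, ht0.ne'], ?_⟩
  rw [hf0, sub_zero, ← Pi.single_smul', hfc, ← Pi.single_smul']

lemma exists_map_single_eq_single_mul {r : ℕ} {A : (Fin r → ℂ) →ₗ[ℝ] (Fin r → ℂ)}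
    (hA : ∀ u v, omega0 (A u) (A v) = omega0 u v)
    (hax : ∀ k (ζ : ℂ), ‖ζ‖ = 1 → ∃ j c, ‖c‖ = 1 ∧ A (Pi.single k ζ) = Pi.single j c)
    (k : Fin r) : ∃ j c, ‖c‖ = 1 ∧ ∀ z, A (Pi.single k z) = Pi.single j (c * z) := by
  obtain ⟨j, c, hc, h1⟩ := hax k 1 norm_one
  obtain ⟨j', d, hd, hI⟩ := hax k I norm_I
  have hω := hA (Pi.single k 1) (Pi.single k I)
  rw [h1, hI, omega0_single_single, omega0_single_single] at hω
  obtain rfl : j = j' := by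
    by_contra hne
    simp [hne] at hω
  simp only [if_true, map_one, one_mul, I_im] at hω
  have hcd : (starRingEnd ℂ) c * d = I := by
    have hre : ((starRingEnd ℂ) c * d).re = 0 :=
      abs_im_eq_norm.mp (by rw [hω, norm_mul, norm_conj, hc, hd]; norm_num)
    exact Complex.ext (by simp [hre]) (by simp [hω])
  have hdc : d = c * I := by
    rw [← hcd, ← mul_assoc, mul_conj, normSq_eq_norm_sq, hc]
    simp
  refine ⟨j, c, hc, fun z => ?_⟩
  have hz : (Pi.single k z : Fin r → ℂ) =
      z.re • (Pi.single k 1 : Fin r → ℂ) + z.im • (Pi.single k I : Fin r → ℂ) := by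
    rw [← Pi.single_smul', ← Pi.single_smul', ← Pi.single_add]
    simp [Complex.real_smul, re_add_im]
  rw [hz, map_add, map_smul, map_smul, h1, hI, hdc, ← Pi.single_smul', ← Pi.single_smul',
    ← Pi.single_add]
  congr 1
  conv_rhs => rw [← re_add_im z]
  simp only [Complex.real_smul]
  ring

lemma exists_perm_of_map_single {ι : Type*} [Fintype ι] [DecidableEq ι]
    {A : (ι → ℂ) →ₗ[ℝ] (ι → ℂ)} (hA : Function.Injective A)
    (h : ∀ k, ∃ j c, ‖c‖ = 1 ∧ ∀ z, A (Pi.single k z) = Pi.single j (c * z)) :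
    ∃ (σ : Equiv.Perm ι) (c : ι → ℂ), (∀ j, ‖c j‖ = 1) ∧ ∀ v j, A v j = c j * v (σ j) := by
  choose p c hc hp using h
  have hc0 : ∀ k, c k ≠ 0 := fun k => norm_ne_zero_iff.mp (by simp [hc])
  have hpinj : Function.Injective p := by
    intro k k' hkk'
    by_contra hne
    have hsame : A (Pi.single k 1) = A (Pi.single k' (c k / c k')) := by
      rw [hp, hp, hkk', mul_one, mul_div_cancel₀ _ (hc0 k')]
    simpa [Pi.single_eq_of_ne hne] using congrFun (hA hsame) k
  let σ := Equiv.ofBijective p (Finite.injective_iff_bijective.mp hpinj)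
  refine ⟨σ.symm, fun j => c (σ.symm j), fun j => hc _, fun v j => ?_⟩
  have hAv : A v = ∑ k, Pi.single (σ k) (c k * v k) := by
    conv_lhs => rw [← Finset.univ_sum_single v]
    simp only [map_sum, hp]
    rfl
  rw [hAv, ← σ.symm.sum_comp]
  simp only [Equiv.apply_symm_apply, Finset.univ_sum_single]

theorem deriv_at_zero_of_polydisc_bisymplectomorphism_general (r : ℕ)
    (f : (Fin r → ℂ) → Fin r → ℂ)
    (hf : IsSmoothDiffeoOn f (polydisc r) (polydisc r))
    (h0 : ∀ z ∈ polydisc r, ∀ u v : Fin r → ℂ,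
      omega0 (fderiv ℝ f z u) (fderiv ℝ f z v) = omega0 u v)
    (hm : ∀ z ∈ polydisc r, ∀ u v : Fin r → ℂ,
      omegaMinus (f z) (fderiv ℝ f z u) (fderiv ℝ f z v) = omegaMinus z u v) :
    ∃ (σ : Equiv.Perm (Fin r)) (c : Fin r → ℂ),
      (∀ j, ‖c j‖ = 1) ∧
      ∀ (v : Fin r → ℂ) (j : Fin r), fderiv ℝ f 0 v j = c j * v (σ j) := by
  obtain ⟨hsmooth, hmaps, -⟩ := hf
  have hdiff : DifferentiableAt ℝ f 0 :=
    (hsmooth.differentiableOn (by simp)).differentiableAt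
      ((isOpen_polydisc r).mem_nhds (zero_mem_polydisc r))
  have hA := h0 0 (zero_mem_polydisc r)
  exact exists_perm_of_map_single (A := (fderiv ℝ f 0 : (Fin r → ℂ) →ₗ[ℝ] Fin r → ℂ))
    (injective_of_omega0 hA)
    (exists_map_single_eq_single_mul hA fun k _ hζ =>
      exists_fderiv_single_eq_single_of_bisymplectic hdiff hmaps h0 hm k hζ)

/-- The derivative at the origin of a bisymplectomorphism of the polydisc is a
permutation of coordinates composed with unimodular coordinatewise multiplications;
in particular it is a `ℂ`-linear automorphism of the polydisc. -/
theorem deriv_at_zero_of_polydisc_bisymplectomorphism (r : ℕ) (hr : 1 ≤ r)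
    (f : (Fin r → ℂ) → Fin r → ℂ)
    (hf : IsSmoothDiffeoOn f (polydisc r) (polydisc r))
    (h0 : ∀ z ∈ polydisc r, ∀ u v : Fin r → ℂ,
      omega0 (fderiv ℝ f z u) (fderiv ℝ f z v) = omega0 u v)
    (hm : ∀ z ∈ polydisc r, ∀ u v : Fin r → ℂ,
      omegaMinus (f z) (fderiv ℝ f z u) (fderiv ℝ f z v) = omegaMinus z u v) :
    ∃ (σ : Equiv.Perm (Fin r)) (c : Fin r → ℂ),
      (∀ j, ‖c j‖ = 1) ∧
      ∀ (v : Fin r → ℂ) (j : Fin r), fderiv ℝ f 0 v j = c j * v (σ j) :=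
  deriv_at_zero_of_polydisc_bisymplectomorphism_general r f hf h0 hm
end
end

section
/- Let r ≥ 1. The map F : Δʳ → ℂʳ defined by F(z)_j = z_j/√(1 − |z_j|²) is a smooth diffeomorphism of Δʳ onto ℂʳ with inverse G(w)_j = w_j/√(1 + |w_j|²), and it satisfies F*ω₀ = ω₋ and F*ω₊ = ω₀; that is, for all z ∈ Δʳ and u, v ∈ ℂʳ: ω₀(DF(z)u, DF(z)v) = ω₋(z)(u,v) and ω₊(F(z))(DF(z)u, DF(z)v) = ω₀(u,v). -/
open Complex Set

noncomputable section

/-- The Fubini-Study form `ω₊(z)(u,v) = Σⱼ Im (conj uⱼ * vⱼ) / (1 + |zⱼ|²)²` on `ℂʳ`. -/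
def omegaPlus {r : ℕ} (z u v : Fin r → ℂ) : ℝ :=
  ∑ j, ((starRingEnd ℂ) (u j) * v j).im / (1 + ‖z j‖ ^ 2) ^ 2

/-- The duality map of the polydisc: `F(z)ⱼ = zⱼ / √(1 - |zⱼ|²)`. -/
def dualityMap {r : ℕ} (z : Fin r → ℂ) : Fin r → ℂ :=
  fun j => z j / (Real.sqrt (1 - ‖z j‖ ^ 2) : ℂ)

/-- The inverse duality map of the polydisc: `G(w)ⱼ = wⱼ / √(1 + |wⱼ|²)`. -/
def dualityInv {r : ℕ} (w : Fin r → ℂ) : Fin r → ℂ :=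
  fun j => w j / (Real.sqrt (1 + ‖w j‖ ^ 2) : ℂ)

/-!
In each coordinate `F` is `y ↦ y / √(1 - ‖y‖²)`, the inverse of Mathlib's
`univUnitBall : ℂ → ball 0 1`, `x ↦ x / √(1 + ‖x‖²)`; this gives smoothness and the inverse
identities. With `t = √(1 - |z|²)`, the real derivative of `F` at `z` is
`u ↦ t⁻¹ u + t⁻³ ⟪z, u⟫ z`. The area form `Im (ū v)` of `ℂ` gets multiplied by the determinant
of this map, `t⁻¹ (t⁻¹ + t⁻³ |z|²) = t⁻⁴ = (1 - |z|²)⁻²`, hence `F*ω₀ = ω₋`; and since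
`1 + |F z|² = (1 - |z|²)⁻¹`, the same factor is cancelled in `F*ω₊ = ω₀`.
-/

open Metric OpenPartialHomeomorph ComplexConjugate

section UnitBall

variable {E : Type*} [NormedAddCommGroup E] [InnerProductSpace ℝ E]

theorem one_add_norm_univUnitBall_symm_sq {y : E} (hy : ‖y‖ < 1) :
    1 + ‖univUnitBall.symm y‖ ^ 2 = (1 - ‖y‖ ^ 2)⁻¹ := by
  have hpos : 0 < 1 - ‖y‖ ^ 2 := by nlinarith [norm_nonneg y]
  rw [univUnitBall_symm_apply, norm_smul, mul_pow, norm_inv, Real.norm_eq_abs,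
    abs_of_nonneg (Real.sqrt_nonneg _), inv_pow, Real.sq_sqrt hpos.le]
  field_simp
  ring

theorem hasFDerivAt_univUnitBall_symm {y : E} (hy : ‖y‖ < 1) :
    HasFDerivAt univUnitBall.symm
      ((√(1 - ‖y‖ ^ 2))⁻¹ • ContinuousLinearMap.id ℝ E
        + (√(1 - ‖y‖ ^ 2))⁻¹ ^ 3 • (innerSL ℝ y).smulRight y) y := by
  have hpos : 0 < 1 - ‖y‖ ^ 2 := by nlinarith [norm_nonneg y]
  have ht : √(1 - ‖y‖ ^ 2) ≠ 0 := (Real.sqrt_pos.2 hpos).ne'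
  have hscale : HasFDerivAt (fun x : E ↦ (√(1 - ‖x‖ ^ 2))⁻¹)
      ((√(1 - ‖y‖ ^ 2))⁻¹ ^ 3 • innerSL ℝ y) y := by
    refine ((hasDerivAt_inv ht).comp_hasFDerivAt y
      (((hasFDerivAt_id y).norm_sq.const_sub 1).sqrt hpos.ne')).congr_fderiv ?_
    ext u
    simp
    field_simp
  rw [show (univUnitBall.symm : E → E) = fun x ↦ (√(1 - ‖x‖ ^ 2))⁻¹ • x from
    funext univUnitBall_symm_apply]
  refine (hscale.smul (hasFDerivAt_id y)).congr_fderiv ?_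
  ext u
  simp [mul_smul]

end UnitBall

theorem Complex.im_conj_mul_smul_add_inner_smulRight (a b : ℝ) (z u v : ℂ) :
    let L := a • ContinuousLinearMap.id ℝ ℂ + b • (innerSL ℝ z).smulRight z
    (conj (L u) * L v).im = a * (a + b * ‖z‖ ^ 2) * (conj u * v).im := by
  simp [Complex.inner, Complex.sq_norm, Complex.normSq_apply]
  ring

theorem im_conj_fderiv_univUnitBall_symm {z : ℂ} (hz : ‖z‖ < 1) (u v : ℂ) :
    (conj (fderiv ℝ univUnitBall.symm z u) * fderiv ℝ univUnitBall.symm z v).im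
      = (conj u * v).im / (1 - ‖z‖ ^ 2) ^ 2 := by
  have hpos : 0 < 1 - ‖z‖ ^ 2 := by nlinarith [norm_nonneg z]
  have ht : √(1 - ‖z‖ ^ 2) ≠ 0 := (Real.sqrt_pos.2 hpos).ne'
  rw [(hasFDerivAt_univUnitBall_symm hz).fderiv, Complex.im_conj_mul_smul_add_inner_smulRight]
  field_simp
  rw [show √(1 - ‖z‖ ^ 2) ^ 4 = (√(1 - ‖z‖ ^ 2) ^ 2) ^ 2 by ring, Real.sq_sqrt hpos.le]
  ring

theorem dualityMap_eq (r : ℕ) : dualityMap (r := r) = fun z j ↦ univUnitBall.symm (z j) := by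
  funext z j
  rw [univUnitBall_symm_apply, Complex.real_smul, ofReal_inv]
  exact div_eq_inv_mul _ _

theorem dualityInv_eq (r : ℕ) : dualityInv (r := r) = fun w j ↦ univUnitBall (w j) := by
  funext w j
  rw [univUnitBall_apply, Complex.real_smul, ofReal_inv]
  exact div_eq_inv_mul _ _

section Polydisc

variable {r : ℕ}

theorem contDiffOn_dualityMap : ContDiffOn ℝ (⊤ : ℕ∞) (dualityMap (r := r)) (polydisc r) := by
  intro z hz
  rw [dualityMap_eq]
  refine (contDiffAt_pi.2 fun j ↦ ?_).contDiffWithinAt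
  exact (contDiffOn_univUnitBall_symm.contDiffAt
    (isOpen_ball.mem_nhds (mem_ball_zero_iff.2 (hz j)))).comp z (contDiffAt_apply ℝ ℂ j z)

theorem contDiff_dualityInv : ContDiff ℝ (⊤ : ℕ∞) (dualityInv (r := r)) := by
  rw [dualityInv_eq]
  exact contDiff_pi.2 fun j ↦ contDiff_univUnitBall.comp (contDiff_apply ℝ ℂ j)

theorem dualityInv_mem_polydisc (w : Fin r → ℂ) : dualityInv w ∈ polydisc r := by
  intro j
  rw [dualityInv_eq]
  exact mem_ball_zero_iff.1 (univUnitBall.map_source (mem_univ (w j)))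

theorem dualityInv_dualityMap {z : Fin r → ℂ} (hz : z ∈ polydisc r) :
    dualityInv (dualityMap z) = z := by
  funext j
  rw [dualityInv_eq, dualityMap_eq]
  exact univUnitBall.right_inv (mem_ball_zero_iff.2 (hz j))

theorem dualityMap_dualityInv (w : Fin r → ℂ) : dualityMap (dualityInv w) = w := by
  funext j
  rw [dualityInv_eq, dualityMap_eq]
  exact univUnitBall.left_inv (mem_univ (w j))

theorem fderiv_dualityMap_apply {z : Fin r → ℂ} (hz : z ∈ polydisc r) (u : Fin r → ℂ)
    (j : Fin r) : fderiv ℝ dualityMap z u j = fderiv ℝ univUnitBall.symm (z j) (u j) := by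
  have h : HasFDerivAt (dualityMap (r := r)) (ContinuousLinearMap.pi fun j ↦
      (fderiv ℝ univUnitBall.symm (z j)).comp (ContinuousLinearMap.proj j)) z := by
    rw [dualityMap_eq, hasFDerivAt_pi]
    exact fun j ↦ (hasFDerivAt_univUnitBall_symm (hz j)).differentiableAt.hasFDerivAt.comp z
      (hasFDerivAt_apply j z)
  rw [h.fderiv]
  rfl

theorem omega0_fderiv_dualityMap {z : Fin r → ℂ} (hz : z ∈ polydisc r) (u v : Fin r → ℂ) :
    omega0 (fderiv ℝ dualityMap z u) (fderiv ℝ dualityMap z v) = omegaMinus z u v := by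
  simp only [omega0, omegaMinus, fderiv_dualityMap_apply hz]
  exact Finset.sum_congr rfl fun j _ ↦ im_conj_fderiv_univUnitBall_symm (hz j) (u j) (v j)

theorem omegaPlus_dualityMap_fderiv_dualityMap {z : Fin r → ℂ} (hz : z ∈ polydisc r)
    (u v : Fin r → ℂ) :
    omegaPlus (dualityMap z) (fderiv ℝ dualityMap z u) (fderiv ℝ dualityMap z v)
      = omega0 u v := by
  simp only [omegaPlus, omega0, fderiv_dualityMap_apply hz]
  refine Finset.sum_congr rfl fun j _ ↦ ?_
  have hpos : 0 < 1 - ‖z j‖ ^ 2 := by nlinarith [norm_nonneg (z j), hz j]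
  rw [im_conj_fderiv_univUnitBall_symm (hz j), dualityMap_eq,
    one_add_norm_univUnitBall_symm_sq (hz j)]
  field_simp

end Polydisc

theorem polydisc_symplectic_duality_general (r : ℕ) :
    ContDiffOn ℝ (⊤ : ℕ∞) (dualityMap (r := r)) (polydisc r) ∧
    ContDiff ℝ (⊤ : ℕ∞) (dualityInv (r := r)) ∧
    (∀ w : Fin r → ℂ, dualityInv w ∈ polydisc r) ∧
    (∀ z ∈ polydisc r, dualityInv (dualityMap z) = z) ∧
    (∀ w : Fin r → ℂ, dualityMap (dualityInv w) = w) ∧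
    (∀ z ∈ polydisc r, ∀ u v : Fin r → ℂ,
      omega0 (fderiv ℝ dualityMap z u) (fderiv ℝ dualityMap z v) = omegaMinus z u v) ∧
    (∀ z ∈ polydisc r, ∀ u v : Fin r → ℂ,
      omegaPlus (dualityMap z) (fderiv ℝ dualityMap z u) (fderiv ℝ dualityMap z v)
        = omega0 u v) := by
  exact ⟨contDiffOn_dualityMap, contDiff_dualityInv, dualityInv_mem_polydisc,
      fun _ ↦ dualityInv_dualityMap, dualityMap_dualityInv, fun _ ↦ omega0_fderiv_dualityMap,
      fun _ ↦ omegaPlus_dualityMap_fderiv_dualityMap⟩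

/-- The duality map of the polydisc is a smooth diffeomorphism onto `ℂʳ` with inverse
`G(w)ⱼ = wⱼ/√(1+|wⱼ|²)`, satisfying the symplectic duality `F*ω₀ = ω₋`, `F*ω₊ = ω₀`. -/
theorem polydisc_symplectic_duality (r : ℕ) (hr : 1 ≤ r) :
    ContDiffOn ℝ (⊤ : ℕ∞) (dualityMap (r := r)) (polydisc r) ∧
    ContDiff ℝ (⊤ : ℕ∞) (dualityInv (r := r)) ∧
    (∀ w : Fin r → ℂ, dualityInv w ∈ polydisc r) ∧
    (∀ z ∈ polydisc r, dualityInv (dualityMap z) = z) ∧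
    (∀ w : Fin r → ℂ, dualityMap (dualityInv w) = w) ∧
    (∀ z ∈ polydisc r, ∀ u v : Fin r → ℂ,
      omega0 (fderiv ℝ dualityMap z u) (fderiv ℝ dualityMap z v) = omegaMinus z u v) ∧
    (∀ z ∈ polydisc r, ∀ u v : Fin r → ℂ,
      omegaPlus (dualityMap z) (fderiv ℝ dualityMap z u) (fderiv ℝ dualityMap z v)
        = omega0 u v) :=
  polydisc_symplectic_duality_general r
end
end
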